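/- Casimir eigenvalue of the basis elements (part of Theorem 4.1 of the paper): for all natural numbers p,q,ℓ with ℓ ≤ p+q, the Laplace operator Δ(w) = [J₀,[J₀,w]] + (1/2)[J₊,[J₋,w]] + (1/2)[J₋,[J₊,w]] satisfies 4·Δ(η(p,q,ℓ)) = ε²·(p+q)·(p+q+2)·η(p,q,ℓ), i.e. η(p,q,ℓ) is an eigenvector of Δ with eigenvalue ε²·n(n+1) where n = (p+q)/2. -/
import Mathlib


open MvPolynomial

noncomputable section

/-- The polynomial ring ℂ[x,y]. -/
abbrev P2 : Type := MvPolynomial (Fin 2) ℂ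

/-- The algebra of ℂ-linear endomorphisms of ℂ[x,y]. -/
abbrev E : Type := Module.End ℂ P2

/-- `a₊` : multiplication by `x`. -/
def aP : E := LinearMap.mulLeft ℂ (X 0 : P2)

/-- `b₊` : multiplication by `y`. -/
def bP : E := LinearMap.mulLeft ℂ (X 1 : P2)

/-- `a₋ = ε ∂/∂x`. -/
def aM (ε : ℝ) : E := (ε : ℂ) • (pderiv (0 : Fin 2)).toLinearMap

/-- `b₋ = ε ∂/∂y`. -/
def bM (ε : ℝ) : E := (ε : ℂ) • (pderiv (1 : Fin 2)).toLinearMap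

def J0 (ε : ℝ) : E := (1/2 : ℂ) • (aP * aM ε - bP * bM ε)
def Jp (ε : ℝ) : E := aP * bM ε
def Jm (ε : ℝ) : E := aM ε * bP
def K0 (ε : ℝ) : E := (1/2 : ℂ) • (aP * aM ε + bP * bM ε + (ε : ℂ) • (1 : E))
def Kp : E := aP * bP
def Km (ε : ℝ) : E := aM ε * bM ε

/-- `(ad J₋)(w) = J₋w − wJ₋`. -/
def adJm (ε : ℝ) (w : E) : E := Jm ε * w - w * Jm ε

/-- `η(p,q,ℓ) = (ad J₋)^ℓ (a₊^p b₋^q)`. -/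
def eta (ε : ℝ) (p q ℓ : ℕ) : E := (adJm ε)^[ℓ] (aP ^ p * bM ε ^ q)

/-- The commutator `[u,w] = uw − wu` in `E`. -/
def commE (u w : E) : E := u * w - w * u

/-! ### Auxiliary algebraic lemmas -/

lemma commE_mul_right (u v w : E) : commE u (v*w) = commE u v * w + v * commE u w := by
  simp only [commE, mul_sub, sub_mul, mul_add, add_mul, mul_assoc]; abel

lemma commE_mul_left (u v w : E) : commE (u*v) w = u * commE v w + commE u w * v := by
  simp only [commE, mul_sub, sub_mul, mul_add, add_mul, mul_assoc]; abel

lemma commE_jacobi (u v w : E) :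
    commE u (commE v w) = commE (commE u v) w + commE v (commE u w) := by
  simp only [commE, mul_sub, sub_mul, mul_add, add_mul, mul_assoc]; abel

lemma commE_smul (c : ℂ) (u w : E) : commE u (c•w) = c • commE u w := by
  simp [commE, mul_smul_comm, smul_mul_assoc, smul_sub]

lemma commE_smul_left (c : ℂ) (u w : E) : commE (c•u) w = c • commE u w := by
  simp [commE, mul_smul_comm, smul_mul_assoc, smul_sub]

lemma commE_sub_left (u v w : E) : commE (u - v) w = commE u w - commE v w := by
  simp only [commE, mul_sub, sub_mul]; abel

lemma commE_zero_right (u : E) : commE u 0 = 0 := by simp [commE]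

lemma commE_of_commute {u w : E} (h : Commute u w) : commE u w = 0 := by
  simp [commE, h.eq]

/-! ### Basic commutation relations -/

lemma pd_comm (i j : Fin 2) (f : P2) :
    pderiv i (pderiv j f) = pderiv j (pderiv i f) := by
  induction f using MvPolynomial.induction_on with
  | C a => simp
  | add p q hp hq => simp [hp, hq]
  | mul_X p k h => by_cases hik : i = k <;> by_cases hjk : j = k <;> subst_vars <;>
      simp [pderiv_mul, pderiv_X, Pi.single_apply, *, add_comm, mul_comm]

lemma aM_aP (ε : ℝ) : aM ε * aP = aP * aM ε + (ε:ℂ) • 1 := by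
  apply LinearMap.ext; intro f
  simp [aM, aP, Module.End.mul_apply, pderiv_mul, mul_comm, add_comm]

lemma bM_bP (ε : ℝ) : bM ε * bP = bP * bM ε + (ε:ℂ) • 1 := by
  apply LinearMap.ext; intro f
  simp [bM, bP, Module.End.mul_apply, pderiv_mul, mul_comm, add_comm]

lemma comm_aM_bP (ε : ℝ) : Commute (aM ε) bP := by
  apply LinearMap.ext; intro f
  simp [aM, bP, Module.End.mul_apply, pderiv_mul, pderiv_X, mul_comm]

lemma comm_aP_bM (ε : ℝ) : Commute aP (bM ε) := by
  apply LinearMap.ext; intro f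
  simp [aP, bM, Module.End.mul_apply, pderiv_mul, pderiv_X, mul_comm]

lemma comm_aP_bP : Commute aP bP := by
  apply LinearMap.ext; intro f
  simp [aP, bP, Module.End.mul_apply]; ring

lemma comm_aM_bM (ε : ℝ) : Commute (aM ε) (bM ε) := by
  apply LinearMap.ext; intro f
  simp [aM, bM, Module.End.mul_apply, pd_comm]

/-! ### Number operators -/

lemma commE_aM_aP (ε : ℝ) : commE (aM ε) aP = (ε:ℂ) • 1 := by
  unfold commE; rw [aM_aP]; abel

lemma commE_bM_bP (ε : ℝ) : commE (bM ε) bP = (ε:ℂ) • 1 := by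
  unfold commE; rw [bM_bP]; abel

lemma commE_aP_aM (ε : ℝ) : commE aP (aM ε) = (-(ε:ℂ)) • 1 := by
  unfold commE; rw [aM_aP]; match_scalars <;> ring

lemma commE_bP_bM (ε : ℝ) : commE bP (bM ε) = (-(ε:ℂ)) • 1 := by
  unfold commE; rw [bM_bP]; match_scalars <;> ring

lemma commE_Na_aP (ε : ℝ) : commE (aP * aM ε) aP = (ε:ℂ) • aP := by
  rw [commE_mul_left, commE_of_commute (Commute.refl aP), commE_aM_aP]
  simp only [mul_smul_comm, mul_one, zero_mul, add_zero]

lemma commE_Nb_bM (ε : ℝ) : commE (bP * bM ε) (bM ε) = (-(ε:ℂ)) • bM ε := by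
  rw [commE_mul_left, commE_of_commute (Commute.refl (bM ε)), commE_bP_bM]
  simp only [mul_zero, zero_add, smul_mul_assoc, one_mul]

lemma commE_Na_aP_pow (ε : ℝ) (p : ℕ) :
    commE (aP * aM ε) (aP ^ p) = ((p:ℂ) * ε) • aP ^ p := by
  induction p with
  | zero => simp [commE]
  | succ p ih =>
    rw [pow_succ, commE_mul_right, ih, commE_Na_aP]
    simp only [smul_mul_assoc, mul_smul_comm, ← pow_succ]
    match_scalars; push_cast; ring

lemma commE_Nb_bM_pow (ε : ℝ) (q : ℕ) :
    commE (bP * bM ε) (bM ε ^ q) = (-((q:ℂ) * ε)) • bM ε ^ q := by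
  induction q with
  | zero => simp [commE]
  | succ q ih =>
    rw [pow_succ, commE_mul_right, ih, commE_Nb_bM]
    simp only [smul_mul_assoc, mul_smul_comm, ← pow_succ]
    match_scalars; push_cast; ring

lemma comm_Na_bM (ε : ℝ) : Commute (aP * aM ε) (bM ε) :=
  ((comm_aP_bM ε).mul_left (comm_aM_bM ε))

lemma comm_Nb_aP (ε : ℝ) : Commute (bP * bM ε) aP :=
  (comm_aP_bP.symm.mul_left (comm_aP_bM ε).symm)

lemma commE_J0_base (ε : ℝ) (p q : ℕ) :
    commE (J0 ε) (aP ^ p * bM ε ^ q)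
      = ((ε:ℂ) * ((p:ℂ) + (q:ℂ)) / 2) • (aP ^ p * bM ε ^ q) := by
  have hNa : commE (aP * aM ε) (aP ^ p * bM ε ^ q)
      = ((p:ℂ) * ε) • (aP ^ p * bM ε ^ q) := by
    rw [commE_mul_right, commE_Na_aP_pow,
      commE_of_commute ((comm_Na_bM ε).pow_right q), smul_mul_assoc]
    simp
  have hNb : commE (bP * bM ε) (aP ^ p * bM ε ^ q)
      = (-((q:ℂ) * ε)) • (aP ^ p * bM ε ^ q) := by
    rw [commE_mul_right, commE_Nb_bM_pow,
      commE_of_commute ((comm_Nb_aP ε).pow_right p)]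
    simp only [zero_mul, zero_add, mul_smul_comm]
  rw [J0, commE_smul_left, commE_sub_left, hNa, hNb]
  match_scalars; push_cast; ring

lemma commE_Jp_base (ε : ℝ) (p q : ℕ) :
    commE (Jp ε) (aP ^ p * bM ε ^ q) = 0 := by
  apply commE_of_commute
  have h1 : Commute (Jp ε) aP := ((Commute.refl aP).mul_left (comm_aP_bM ε).symm)
  have h2 : Commute (Jp ε) (bM ε) := ((comm_aP_bM ε).mul_left (Commute.refl (bM ε)))
  exact (h1.pow_right p).mul_right (h2.pow_right q)

/-! ### The sl₂ relations -/

lemma commE_J0_Jm (ε : ℝ) : commE (J0 ε) (Jm ε) = (-(ε:ℂ)) • Jm ε := by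
  have hNaaM : commE (aP * aM ε) (aM ε) = (-(ε:ℂ)) • aM ε := by
    rw [commE_mul_left, commE_of_commute (Commute.refl (aM ε)), commE_aP_aM]
    simp only [mul_zero, zero_add, smul_mul_assoc, one_mul]
  have hNa : commE (aP * aM ε) (Jm ε) = (-(ε:ℂ)) • Jm ε := by
    rw [Jm, commE_mul_right,
      commE_of_commute (comm_aP_bP.mul_left (comm_aM_bP ε)), hNaaM]
    simp only [smul_mul_assoc, mul_zero, add_zero]
  have hNbB : commE (bP * bM ε) bP = (ε:ℂ) • bP := by
    rw [commE_mul_left, commE_bM_bP, commE_of_commute (Commute.refl bP)]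
    simp only [mul_smul_comm, mul_one, zero_mul, add_zero]
  have hNb : commE (bP * bM ε) (Jm ε) = (ε:ℂ) • Jm ε := by
    rw [Jm, commE_mul_right,
      commE_of_commute ((comm_aM_bP ε).symm.mul_left (comm_aM_bM ε).symm), hNbB]
    simp only [zero_mul, zero_add, mul_smul_comm]
  rw [J0, commE_smul_left, commE_sub_left, hNa, hNb]
  match_scalars; ring

lemma commE_Jp_Jm (ε : ℝ) : commE (Jp ε) (Jm ε) = (2*(ε:ℂ)) • J0 ε := by
  have h1 : commE (Jp ε) (aM ε) = (-(ε:ℂ)) • bM ε := by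
    rw [Jp, commE_mul_left, commE_of_commute (comm_aM_bM ε).symm, commE_aP_aM]
    simp only [mul_zero, zero_add, smul_mul_assoc, one_mul]
  have h2 : commE (Jp ε) bP = (ε:ℂ) • aP := by
    rw [Jp, commE_mul_left, commE_of_commute comm_aP_bP, commE_bM_bP]
    simp only [mul_smul_comm, mul_one, zero_mul, add_zero]
  rw [Jm, commE_mul_right, h1, h2]
  simp only [smul_mul_assoc, mul_smul_comm]
  rw [bM_bP, aM_aP, J0]
  simp only [smul_add, smul_sub, smul_smul]
  match_scalars <;> ring

/-! ### Iterated commutators -/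

lemma eta_zero (ε : ℝ) (p q : ℕ) : eta ε p q 0 = aP ^ p * bM ε ^ q := rfl

lemma eta_succ (ε : ℝ) (p q ℓ : ℕ) :
    eta ε p q (ℓ+1) = commE (Jm ε) (eta ε p q ℓ) := by
  rw [eta, Function.iterate_succ_apply']; rfl

lemma commE_J0_eta (ε : ℝ) (p q ℓ : ℕ) :
    commE (J0 ε) (eta ε p q ℓ)
      = ((ε:ℂ) * (((p:ℂ) + (q:ℂ)) / 2 - (ℓ:ℂ))) • eta ε p q ℓ := by
  induction ℓ with
  | zero => rw [eta_zero, commE_J0_base]; match_scalars; push_cast; ring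
  | succ ℓ ih =>
    rw [eta_succ, commE_jacobi, commE_J0_Jm, ih, commE_smul, ← eta_succ,
      commE_smul_left, ← eta_succ]
    match_scalars; push_cast; ring

lemma commE_Jp_eta (ε : ℝ) (p q ℓ : ℕ) :
    commE (Jp ε) (eta ε p q (ℓ+1))
      = ((ε:ℂ)^2 * ((ℓ:ℂ)+1) * ((p:ℂ) + (q:ℂ) - (ℓ:ℂ))) • eta ε p q ℓ := by
  induction ℓ with
  | zero =>
    rw [eta_succ, commE_jacobi, commE_Jp_Jm, commE_smul_left, commE_J0_eta,
      eta_zero, commE_Jp_base, commE_zero_right]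
    match_scalars; push_cast; ring
  | succ ℓ ih =>
    rw [eta_succ, commE_jacobi, commE_Jp_Jm, commE_smul_left, commE_J0_eta, ih,
      commE_smul, ← eta_succ]
    match_scalars; push_cast; ring

/-- Casimir eigenvalue of the basis elements (part of Theorem 4.1): the Laplace
operator `Δ(w) = [J₀,[J₀,w]] + ½[J₊,[J₋,w]] + ½[J₋,[J₊,w]]` satisfies
`4Δ(η(p,q,ℓ)) = ε²(p+q)(p+q+2)·η(p,q,ℓ)`. -/
theorem eta_casimir_eigenvalue (ε : ℝ) (p q ℓ : ℕ) (hℓ : ℓ ≤ p + q) :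
    (4 : ℂ) • (commE (J0 ε) (commE (J0 ε) (eta ε p q ℓ))
        + (1/2 : ℂ) • commE (Jp ε) (commE (Jm ε) (eta ε p q ℓ))
        + (1/2 : ℂ) • commE (Jm ε) (commE (Jp ε) (eta ε p q ℓ)))
      = ((ε : ℂ) ^ 2 * ((p : ℂ) + (q : ℂ)) * ((p : ℂ) + (q : ℂ) + 2)) •
          eta ε p q ℓ := by
  have h1 : commE (J0 ε) (commE (J0 ε) (eta ε p q ℓ))
      = ((ε:ℂ) * (((p:ℂ) + (q:ℂ)) / 2 - (ℓ:ℂ)))^2 • eta ε p q ℓ := by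
    rw [commE_J0_eta, commE_smul, commE_J0_eta, smul_smul, ← sq]
  have h2 : commE (Jp ε) (commE (Jm ε) (eta ε p q ℓ))
      = ((ε:ℂ)^2 * ((ℓ:ℂ)+1) * ((p:ℂ) + (q:ℂ) - (ℓ:ℂ))) • eta ε p q ℓ := by
    rw [← eta_succ, commE_Jp_eta]
  have h3 : commE (Jm ε) (commE (Jp ε) (eta ε p q ℓ))
      = ((ε:ℂ)^2 * (ℓ:ℂ) * ((p:ℂ) + (q:ℂ) - (ℓ:ℂ) + 1)) • eta ε p q ℓ := by
    cases ℓ with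
    | zero => rw [eta_zero, commE_Jp_base, commE_zero_right]; simp
    | succ k =>
      rw [commE_Jp_eta, commE_smul, ← eta_succ]
      match_scalars; push_cast; ring
  rw [h1, h2, h3]
  match_scalars; push_cast; ring
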